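/- arXiv:2403.06262 — 9 statements merged into one kernel-verified Lean document; each statement's English description precedes it below -/
import Mathlib

section
/- A linear operator T : H → Y from a Hilbert space H to a Banach space Y is bounded (continuous) if and only if T maps every orthonormal sequence of H onto a bounded sequence in Y. -/
/-!
If `T` is discontinuous, its restriction to the orthogonal complement of any finite-dimensional
subspace `K` is still discontinuous, since `T` is automatically continuous on `K` and
`H = K ⊕ Kᗮ`. So `Kᗮ` contains unit vectors with `‖T x‖` arbitrarily large, and choosing them
recursively, each orthogonal to the span of the previous ones, gives an orthonormal sequence on
which `T` is unbounded. Conversely a bounded operator maps unit vectors into a ball.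
-/

open Filter

namespace LinearMap

theorem continuous_of_norm_map_le_of_norm_eq_one {𝕜 E F : Type*} [RCLike 𝕜]
    [NormedAddCommGroup E] [NormedSpace 𝕜 E] [NormedAddCommGroup F] [NormedSpace 𝕜 F]
    (f : E →ₗ[𝕜] F) (C : ℝ) (hf : ∀ x, ‖x‖ = 1 → ‖f x‖ ≤ C) : Continuous f := by
  refine AddMonoidHomClass.continuous_of_bound f C fun x ↦ ?_
  rcases eq_or_ne x 0 with rfl | hx
  · simp
  have hunit := hf _ (norm_smul_inv_norm (𝕜 := 𝕜) hx)
  rw [map_smul, norm_smul, norm_inv, RCLike.norm_ofReal, abs_norm,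
    inv_mul_le_iff₀ (norm_pos_iff.2 hx)] at hunit
  linarith

variable {𝕜 H Y : Type*} [RCLike 𝕜] [NormedAddCommGroup H] [InnerProductSpace 𝕜 H]
  [NormedAddCommGroup Y] [NormedSpace 𝕜 Y]

theorem continuous_of_continuous_domRestrict_orthogonal (T : H →ₗ[𝕜] Y)
    (K : Submodule 𝕜 H) [FiniteDimensional 𝕜 K] (hT : Continuous (T.domRestrict Kᗮ)) :
    Continuous T := by
  have : CompleteSpace K := FiniteDimensional.complete 𝕜 K
  have hsplit : ⇑T = fun x ↦ T.domRestrict K (K.orthogonalProjectionOnto x) +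
      T.domRestrict Kᗮ (Kᗮ.orthogonalProjectionOnto x) := by
    ext x
    simp
  rw [hsplit]
  exact ((T.domRestrict K).continuous_of_finiteDimensional.comp
    (ContinuousLinearMap.continuous _)).add (hT.comp (ContinuousLinearMap.continuous _))

theorem exists_mem_orthogonal_norm_eq_one_le_norm_map {T : H →ₗ[𝕜] Y} (hT : ¬Continuous T)
    (K : Submodule 𝕜 H) [FiniteDimensional 𝕜 K] (C : ℝ) :
    ∃ x ∈ Kᗮ, ‖x‖ = 1 ∧ C ≤ ‖T x‖ := by
  by_contra! hbound
  exact hT <| T.continuous_of_continuous_domRestrict_orthogonal K <|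
    (T.domRestrict Kᗮ).continuous_of_norm_map_le_of_norm_eq_one C fun x hx ↦
      (hbound x x.2 hx).le

end LinearMap

theorem exists_orthonormal_tendsto_atTop (𝕜 : Type*) {H : Type*} [RCLike 𝕜]
    [NormedAddCommGroup H] [InnerProductSpace 𝕜 H] (f : H → ℝ)
    (hf : ∀ (K : Submodule 𝕜 H), FiniteDimensional 𝕜 K → ∀ C : ℝ,
      ∃ x ∈ Kᗮ, ‖x‖ = 1 ∧ C ≤ f x) :
    ∃ u : ℕ → H, Orthonormal 𝕜 u ∧ Tendsto (f ∘ u) atTop atTop := by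
  obtain ⟨u, hunit, hnext⟩ := exists_seq_of_forall_finset_exists (fun x : H ↦ ‖x‖ = 1)
    (fun x y ↦ inner 𝕜 x y = 0 ∧ f x + 1 ≤ f y) fun s _ ↦ by
      obtain ⟨C, hC⟩ := (s.finite_toSet.image f).bddAbove
      obtain ⟨y, hy, hy1, hfy⟩ := hf (Submodule.span 𝕜 s)
        (FiniteDimensional.span_finset 𝕜 s) (C + 1)
      exact ⟨y, hy1, fun x hx ↦ ⟨Submodule.inner_right_of_mem_orthogonal
        (Submodule.subset_span hx) hy, by linarith [hC (Set.mem_image_of_mem f hx)]⟩⟩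
  have horth : Pairwise fun i j ↦ inner 𝕜 (u i) (u j) = 0 := by
    intro i j hij
    rcases hij.lt_or_gt with h | h
    · exact (hnext i j h).1
    · exact inner_eq_zero_symm.1 (hnext j i h).1
  have hgrowth : ∀ n : ℕ, f (u 0) + n ≤ f (u n) := by
    intro n
    induction n with
    | zero => simp
    | succ n ih => push_cast; linarith [(hnext n (n + 1) n.lt_succ_self).2]
  exact ⟨u, ⟨hunit, horth⟩, tendsto_atTop_mono hgrowth
    (tendsto_atTop_add_const_left _ _ tendsto_natCast_atTop_atTop)⟩

theorem bounded_iff_bounded_on_orthonormal_sequences_general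
    {𝕜 H Y : Type*} [RCLike 𝕜] [NormedAddCommGroup H] [InnerProductSpace 𝕜 H]
    [NormedAddCommGroup Y] [NormedSpace 𝕜 Y]
    (T : H →ₗ[𝕜] Y) :
    Continuous T ↔
      ∀ u : ℕ → H, Orthonormal 𝕜 u → ∃ M : ℝ, ∀ n : ℕ, ‖T (u n)‖ ≤ M := by
  refine ⟨fun hT u hu ↦ ?_, fun hbound ↦ ?_⟩
  · let T' : H →L[𝕜] Y := ⟨T, hT⟩
    exact ⟨‖T'‖, fun n ↦ (T'.le_opNorm (u n)).trans_eq (by rw [hu.1 n, mul_one])⟩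
  by_contra hT
  obtain ⟨u, hu, hunbounded⟩ := exists_orthonormal_tendsto_atTop 𝕜 (fun x ↦ ‖T x‖)
    fun K _ ↦ LinearMap.exists_mem_orthogonal_norm_eq_one_le_norm_map hT K
  obtain ⟨M, hM⟩ := hbound u hu
  obtain ⟨n, hn⟩ := (hunbounded.eventually_gt_atTop M).exists
  exact (hM n).not_gt hn

theorem bounded_iff_bounded_on_orthonormal_sequences
    {𝕜 H Y : Type*} [RCLike 𝕜] [NormedAddCommGroup H] [InnerProductSpace 𝕜 H]
    [CompleteSpace H] [NormedAddCommGroup Y] [NormedSpace 𝕜 Y] [CompleteSpace Y]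
    (T : H →ₗ[𝕜] Y) :
    Continuous T ↔
      ∀ u : ℕ → H, Orthonormal 𝕜 u → ∃ M : ℝ, ∀ n : ℕ, ‖T (u n)‖ ≤ M :=
  bounded_iff_bounded_on_orthonormal_sequences_general T
end

section
/- A linear operator T : H → Y from a Hilbert space H to a Banach space Y is bounded if it maps every orthonormal sequence of H onto a limited subset of Y. -/
/-!
If `T` is not continuous, it stays unbounded on the orthogonal complement of every
finite-dimensional subspace, since on that subspace it is automatically continuous. This lets one
choose inductively an orthonormal sequence `(u n)` with `‖T (u n)‖ ≥ n`. On the other hand a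
limited set is weakly bounded (test it against `f / (n + 1)`), hence norm bounded by the uniform
boundedness principle, so `T` cannot map `(u n)` onto a limited set.
-/

open Filter

/-- A subset `A` of a normed space is limited if every weak*-null sequence of functionals
converges to `0` uniformly on `A`. -/
def IsLimited (𝕜 : Type*) [RCLike 𝕜] {X : Type*} [NormedAddCommGroup X]
    [NormedSpace 𝕜 X] (A : Set X) : Prop :=
  ∀ f : ℕ → X →L[𝕜] 𝕜, (∀ x : X, Tendsto (fun n => f n x) atTop (nhds 0)) →
    ∀ ε > (0 : ℝ), ∃ N : ℕ, ∀ n ≥ N, ∀ a ∈ A, ‖f n a‖ < ε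

section Limited

variable {𝕜 X : Type*} [RCLike 𝕜] [NormedAddCommGroup X] [NormedSpace 𝕜 X] {A : Set X}

theorem IsLimited.exists_norm_apply_le (hA : IsLimited 𝕜 A) (f : StrongDual 𝕜 X) :
    ∃ C, ∀ a ∈ A, ‖f a‖ ≤ C := by
  have hnorm (n : ℕ) (x : X) :
      ‖(((n : 𝕜) + 1)⁻¹ • f) x‖ = ‖f x‖ * (1 / (n + 1)) := by
    rw [smul_apply, norm_smul, norm_inv, ← Nat.cast_succ,
      RCLike.norm_natCast, Nat.cast_succ, one_div, mul_comm]
  have hnull (x : X) : Tendsto (fun n : ℕ => (((n : 𝕜) + 1)⁻¹ • f) x) atTop (nhds 0) := by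
    rw [tendsto_zero_iff_norm_tendsto_zero]
    simpa only [hnorm, mul_zero] using
      tendsto_one_div_add_atTop_nhds_zero_nat.const_mul ‖f x‖
  obtain ⟨N, hN⟩ := hA _ hnull 1 one_pos
  refine ⟨N + 1, fun a ha => ?_⟩
  have := hN N le_rfl a ha
  rw [hnorm, mul_one_div, div_lt_one (by positivity)] at this
  exact this.le

theorem isBounded_of_forall_dual_bounded
    (h : ∀ f : StrongDual 𝕜 X, ∃ C, ∀ a ∈ A, ‖f a‖ ≤ C) :
    Bornology.IsBounded A := by
  -- Banach–Steinhaus for the bidual images of `A`, whose domain `StrongDual 𝕜 X` is complete.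
  obtain ⟨C, hC⟩ := banach_steinhaus
    (g := fun a : A => NormedSpace.inclusionInDoubleDualLi 𝕜 (a : X))
    fun f => let ⟨C, hC⟩ := h f; ⟨C, fun a => hC a a.2⟩
  exact isBounded_iff_forall_norm_le.2
    ⟨C, fun a ha => (NormedSpace.inclusionInDoubleDualLi 𝕜).norm_map a ▸ hC ⟨a, ha⟩⟩

theorem IsLimited.isBounded (hA : IsLimited 𝕜 A) : Bornology.IsBounded A :=
  isBounded_of_forall_dual_bounded hA.exists_norm_apply_le

end Limited

namespace LinearMap

variable {𝕜 H Y : Type*} [RCLike 𝕜] [NormedAddCommGroup H] [InnerProductSpace 𝕜 H]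
  [NormedAddCommGroup Y] [NormedSpace 𝕜 Y]

theorem continuous_of_continuous_comp_orthogonal (T : H →ₗ[𝕜] Y) (K : Submodule 𝕜 H)
    [FiniteDimensional 𝕜 K] (hT : Continuous (T.comp Kᗮ.subtype)) : Continuous T := by
  have hK : Continuous (T.comp K.subtype) := LinearMap.continuous_of_finiteDimensional _
  have hsplit : ⇑T = fun x => T.comp K.subtype (K.orthogonalProjectionOnto x) +
      T.comp Kᗮ.subtype (Kᗮ.orthogonalProjectionOnto x) := by
    ext x
    conv_lhs => rw [← K.starProjection_add_starProjection_orthogonal x]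
    simp only [Submodule.starProjection_apply, map_add, comp_apply, Submodule.coe_subtype]
  rw [hsplit]
  exact (hK.comp K.orthogonalProjectionOnto.continuous).add
    (hT.comp Kᗮ.orthogonalProjectionOnto.continuous)

theorem exists_mem_orthogonal_norm_eq_one_lt_norm_apply {T : H →ₗ[𝕜] Y} (hT : ¬Continuous T)
    (K : Submodule 𝕜 H) [FiniteDimensional 𝕜 K] (C : ℝ) :
    ∃ x ∈ Kᗮ, ‖x‖ = 1 ∧ C < ‖T x‖ := by
  have hunbdd : ¬∀ x : Kᗮ, ‖T x‖ ≤ C * ‖x‖ := fun hC =>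
    hT (T.continuous_of_continuous_comp_orthogonal K
      (AddMonoidHomClass.continuous_of_bound (T.comp Kᗮ.subtype) C hC))
  push Not at hunbdd
  obtain ⟨⟨x, hxK⟩, hx⟩ := hunbdd
  have hx0 : x ≠ 0 := by rintro rfl; simp at hx
  have hxpos : 0 < ‖x‖ := norm_pos_iff.2 hx0
  refine ⟨(‖x‖⁻¹ : 𝕜) • x, Kᗮ.smul_mem _ hxK, norm_smul_inv_norm hx0, ?_⟩
  rw [map_smul, norm_smul, norm_inv, RCLike.norm_ofReal, abs_of_pos hxpos, inv_mul_eq_div,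
    lt_div_iff₀ hxpos]
  exact hx

theorem exists_orthonormal_natCast_le_norm_apply {T : H →ₗ[𝕜] Y} (hT : ¬Continuous T) :
    ∃ u : ℕ → H, Orthonormal 𝕜 u ∧ ∀ n : ℕ, (n : ℝ) ≤ ‖T (u n)‖ := by
  obtain ⟨u, hu1, hu⟩ := exists_seq_of_forall_finset_exists (fun x : H => ‖x‖ = 1)
    (fun x y => inner 𝕜 x y = 0 ∧ ‖T x‖ + 1 ≤ ‖T y‖) fun s _ => by
      obtain ⟨y, hy, hy1, hTy⟩ := exists_mem_orthogonal_norm_eq_one_lt_norm_apply hT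
        (Submodule.span 𝕜 (s : Set H)) (∑ x ∈ s, ‖T x‖ + 1)
      refine ⟨y, hy1, fun x hx => ⟨Submodule.inner_right_of_mem_orthogonal
        (Submodule.subset_span hx) hy, ?_⟩⟩
      linarith [Finset.single_le_sum (fun x _ => norm_nonneg (T x)) hx]
  refine ⟨u, ⟨hu1, fun i j hij => ?_⟩, fun n => ?_⟩
  · rcases hij.lt_or_gt with hlt | hgt
    · exact (hu i j hlt).1
    · exact inner_eq_zero_symm.1 (hu j i hgt).1
  · induction n with
    | zero => simp
    | succ n ih => push_cast; linarith [(hu n (n + 1) n.lt_succ_self).2]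

end LinearMap

theorem bounded_of_limited_on_orthonormal_sequences_general
    {𝕜 H Y : Type*} [RCLike 𝕜] [NormedAddCommGroup H] [InnerProductSpace 𝕜 H]
    [NormedAddCommGroup Y] [NormedSpace 𝕜 Y]
    (T : H →ₗ[𝕜] Y)
    (h : ∀ u : ℕ → H, Orthonormal 𝕜 u → IsLimited 𝕜 (Set.range fun n => T (u n))) :
    Continuous T := by
  by_contra hT
  obtain ⟨u, hu, hTu⟩ := T.exists_orthonormal_natCast_le_norm_apply hT
  obtain ⟨C, hC⟩ := (h u hu).isBounded.exists_norm_le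
  have hlarge := hTu (⌈C⌉₊ + 1)
  push_cast at hlarge
  linarith [hC _ ⟨⌈C⌉₊ + 1, rfl⟩, Nat.le_ceil C]

theorem bounded_of_limited_on_orthonormal_sequences
    {𝕜 H Y : Type*} [RCLike 𝕜] [NormedAddCommGroup H] [InnerProductSpace 𝕜 H]
    [CompleteSpace H] [NormedAddCommGroup Y] [NormedSpace 𝕜 Y] [CompleteSpace Y]
    (T : H →ₗ[𝕜] Y)
    (h : ∀ u : ℕ → H, Orthonormal 𝕜 u → IsLimited 𝕜 (Set.range fun n => T (u n))) :
    Continuous T :=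
  bounded_of_limited_on_orthonormal_sequences_general T h
end

section
/- A linear operator T : H → Y from a Hilbert space H to a Banach space Y is compact if and only if T maps every orthonormal subset of H into a relatively compact subset of Y. -/
/-!
Suppose `T` maps orthonormal sets to relatively compact sets. If some `ε > 0` admitted no
finite-dimensional `K` with `‖T x‖ ≤ ε ‖x‖` on `Kᗮ`, there would be an orthonormal sequence `eₙ`
with `‖T eₙ‖ ≥ ε`. A subsequence of `T eₙ` converges to some `y ≠ 0`, so from its tail one forms
normalised sums over disjoint blocks of `(m + 1) ^ 2` vectors: they are again orthonormal, but
their images have norms at least `(m + 1) ‖y‖ / 2`, which is unbounded. Hence `T` is, in operator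
norm, a limit of the finite-rank operators `T ∘ P_K`, and is therefore compact.
-/

open Filter Metric Finset Topology

section Approximation

variable {𝕜 E F : Type*} [NontriviallyNormedField 𝕜] [NormedAddCommGroup E] [NormedSpace 𝕜 E]
  [NormedAddCommGroup F] [NormedSpace 𝕜 F]

theorem LinearMap.continuous_of_norm_sub_le (T : E →ₗ[𝕜] F) (S : E →L[𝕜] F) {c : ℝ}
    (h : ∀ x, ‖T x - S x‖ ≤ c * ‖x‖) : Continuous T :=
  AddMonoidHomClass.continuous_of_bound T (‖S‖ + c) fun x =>
    calc ‖T x‖ ≤ ‖S x‖ + ‖T x - S x‖ := norm_le_insert' _ _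
      _ ≤ ‖S‖ * ‖x‖ + c * ‖x‖ := add_le_add (S.le_opNorm x) (h x)
      _ = (‖S‖ + c) * ‖x‖ := by ring

theorem LinearMap.isCompactOperator_of_forall_norm_sub_le [CompleteSpace F] (T : E →ₗ[𝕜] F)
    (h : ∀ ε > 0, ∃ S : E →L[𝕜] F, IsCompactOperator S ∧ ∀ x, ‖T x - S x‖ ≤ ε * ‖x‖) :
    IsCompactOperator T := by
  obtain ⟨S₁, -, hS₁⟩ := h 1 one_pos
  let T' : E →L[𝕜] F := ⟨T, T.continuous_of_norm_sub_le S₁ hS₁⟩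
  choose S hS hTS using fun n : ℕ => h (1 / (n + 1)) Nat.one_div_pos_of_nat
  have hST : Tendsto S atTop (𝓝 T') := by
    rw [tendsto_iff_norm_sub_tendsto_zero]
    refine squeeze_zero (fun n => norm_nonneg _) (fun n => ?_)
      tendsto_one_div_add_atTop_nhds_zero_nat
    refine (S n - T').opNorm_le_bound Nat.one_div_pos_of_nat.le fun x => ?_
    change ‖S n x - T x‖ ≤ _
    rw [norm_sub_rev]
    exact hTS n x
  exact isCompactOperator_of_tendsto hST (Eventually.of_forall hS)

end Approximation

theorem card_mul_sub_le_norm_sum {ι 𝕜 E : Type*} [RCLike 𝕜] [NormedAddCommGroup E]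
    [NormedSpace 𝕜 E] (s : Finset ι) (z : ι → E) (y : E) {r : ℝ}
    (h : ∀ i ∈ s, ‖z i - y‖ ≤ r) : #s * (‖y‖ - r) ≤ ‖∑ i ∈ s, z i‖ := by
  have hdev : ‖∑ i ∈ s, (z i - y)‖ ≤ #s * r := by
    simpa using norm_sum_le_of_le s h
  have hy : ‖∑ _i ∈ s, y‖ = #s * ‖y‖ := by
    rw [sum_const, RCLike.norm_nsmul 𝕜, nsmul_eq_mul]
  have hsplit : ∑ _i ∈ s, y = ∑ i ∈ s, z i - ∑ i ∈ s, (z i - y) := by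
    rw [sum_sub_distrib, sub_sub_cancel]
  have := norm_sub_le (∑ i ∈ s, z i) (∑ i ∈ s, (z i - y))
  rw [← hsplit, hy] at this
  linarith

section InnerProductSpace

variable (𝕜 : Type*) {H Y : Type*} [RCLike 𝕜] [NormedAddCommGroup H] [InnerProductSpace 𝕜 H]

local notation "⟪" x ", " y "⟫" => @inner 𝕜 _ _ x y

/-- Blocks of size `(m + 1) ^ 2` make the normalising factor `(m + 1)⁻¹` instead of a square
root. -/
noncomputable def normalizedBlockSum (v : ℕ × ℕ → H) (m : ℕ) : H :=
  ((m + 1 : 𝕜))⁻¹ • ∑ p ∈ {m} ×ˢ range ((m + 1) ^ 2), v p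

variable {𝕜}

theorem Orthonormal.inner_sum_sum {ι : Type*} [DecidableEq ι] {v : ι → H}
    (hv : Orthonormal 𝕜 v) (s t : Finset ι) : ⟪∑ i ∈ s, v i, ∑ j ∈ t, v j⟫ = #(s ∩ t) := by
  simp_rw [sum_inner, inner_sum, orthonormal_iff_ite.mp hv, sum_ite_eq, sum_ite_mem, sum_const,
    nsmul_one]

theorem orthonormal_normalizedBlockSum {v : ℕ × ℕ → H} (hv : Orthonormal 𝕜 v) :
    Orthonormal 𝕜 (normalizedBlockSum 𝕜 v) := by
  rw [orthonormal_iff_ite]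
  intro m m'
  simp only [normalizedBlockSum, inner_smul_left, inner_smul_right, hv.inner_sum_sum,
    product_inter_product, card_product]
  split_ifs with h
  · subst h
    have hm : (m + 1 : 𝕜) ≠ 0 := by exact_mod_cast m.succ_ne_zero
    simp only [inter_self, card_singleton, card_range, one_mul, map_inv₀, map_add, map_natCast,
      map_one, Nat.cast_pow, Nat.cast_add, Nat.cast_one]
    field_simp
  · simp [h]

variable [NormedAddCommGroup Y] [NormedSpace 𝕜 Y]

theorem le_norm_apply_normalizedBlockSum (T : H →ₗ[𝕜] Y) {v : ℕ × ℕ → H} {y : Y} {r : ℝ}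
    (h : ∀ p, ‖T (v p) - y‖ ≤ r) (m : ℕ) :
    (m + 1) * (‖y‖ - r) ≤ ‖T (normalizedBlockSum 𝕜 v m)‖ := by
  have hsum := card_mul_sub_le_norm_sum (𝕜 := 𝕜) ({m} ×ˢ range ((m + 1) ^ 2))
    (fun p => T (v p)) y fun p _ => h p
  rw [card_product, card_singleton, card_range, one_mul] at hsum
  have hm : (0 : ℝ) < m + 1 := m.cast_add_one_pos
  rw [normalizedBlockSum, map_smul, map_sum, norm_smul, norm_inv]
  calc (m + 1) * (‖y‖ - r) = (m + 1 : ℝ)⁻¹ * (((m + 1) ^ 2 : ℕ) * (‖y‖ - r)) := by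
        field_simp
        push_cast
        ring
    _ ≤ (m + 1 : ℝ)⁻¹ * ‖∑ p ∈ {m} ×ˢ range ((m + 1) ^ 2), T (v p)‖ := by gcongr
    _ = _ := by
        congr
        exact_mod_cast (RCLike.norm_natCast (K := 𝕜) (m + 1)).symm

theorem exists_norm_apply_lt_of_orthonormal (T : H →ₗ[𝕜] Y)
    (hT : ∀ S : Set H, Orthonormal 𝕜 ((↑) : S → H) → IsCompact (closure (T '' S)))
    {e : ℕ → H} (he : Orthonormal 𝕜 e) {δ : ℝ} (hδ : 0 < δ) : ∃ n, ‖T (e n)‖ < δ := by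
  by_contra! hle
  obtain ⟨y, -, φ, hφ, hy⟩ := (hT _ he.toSubtypeRange).tendsto_subseq fun n =>
    subset_closure (Set.mem_image_of_mem T (Set.mem_range_self n))
  have hδy : δ ≤ ‖y‖ := ge_of_tendsto hy.norm (Eventually.of_forall fun k => hle (φ k))
  obtain ⟨N, hN⟩ := eventually_atTop.1
    (hy.eventually (closedBall_mem_nhds y (half_pos (hδ.trans_le hδy))))
  let v : ℕ × ℕ → H := fun p => e (φ (N + Nat.pairEquiv p))
  have hv : Orthonormal 𝕜 v :=
    he.comp _ (hφ.injective.comp ((add_right_injective N).comp Nat.pairEquiv.injective))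
  have hvy : ∀ p, ‖T (v p) - y‖ ≤ ‖y‖ / 2 := fun p =>
    dist_eq_norm (T (v p)) y ▸ hN (N + Nat.pairEquiv p) (Nat.le_add_right _ _)
  have hbdd := (hT _ (orthonormal_normalizedBlockSum hv).toSubtypeRange).isBounded
  obtain ⟨C, hC⟩ := isBounded_iff_forall_norm_le.1 hbdd
  obtain ⟨m, hm⟩ := exists_nat_gt (C / (‖y‖ / 2))
  have hupper := hC _ (subset_closure (Set.mem_image_of_mem T (Set.mem_range_self m)))
  have hlower := le_norm_apply_normalizedBlockSum T hvy m
  rw [div_lt_iff₀ (by linarith)] at hm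
  linarith

theorem exists_orthonormal_seq_of_forall_finiteDimensional (P : H → Prop)
    (h : ∀ K : Submodule 𝕜 H, FiniteDimensional 𝕜 K → ∃ x ∈ Kᗮ, ‖x‖ = 1 ∧ P x) :
    ∃ e : ℕ → H, Orthonormal 𝕜 e ∧ ∀ n, P (e n) := by
  obtain ⟨e, he, horth⟩ := exists_seq_of_forall_finset_exists (fun x => ‖x‖ = 1 ∧ P x)
    (fun x y => ⟪x, y⟫ = 0) fun s _ => by
      obtain ⟨x, hxK, hx⟩ := h (Submodule.span 𝕜 s) inferInstance
      exact ⟨x, hx, fun v hv => hxK v (Submodule.subset_span hv)⟩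
  refine ⟨e, ⟨fun n => (he n).1, fun m n hmn => ?_⟩, fun n => (he n).2⟩
  rcases hmn.lt_or_gt with hlt | hgt
  · exact horth m n hlt
  · exact inner_eq_zero_symm.1 (horth n m hgt)

theorem exists_finiteDimensional_norm_apply_le_of_mem_orthogonal (T : H →ₗ[𝕜] Y)
    (hT : ∀ S : Set H, Orthonormal 𝕜 ((↑) : S → H) → IsCompact (closure (T '' S)))
    {ε : ℝ} (hε : 0 < ε) :
    ∃ K : Submodule 𝕜 H, FiniteDimensional 𝕜 K ∧ ∀ x ∈ Kᗮ, ‖T x‖ ≤ ε * ‖x‖ := by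
  by_contra! hK
  obtain ⟨e, he, hTe⟩ := exists_orthonormal_seq_of_forall_finiteDimensional
    (fun x => ε ≤ ‖T x‖) fun K hKfin => by
      obtain ⟨x, hxK, hx⟩ := hK K hKfin
      have hx0 : x ≠ 0 := by
        rintro rfl
        simp at hx
      refine ⟨(‖x‖⁻¹ : 𝕜) • x, Kᗮ.smul_mem _ hxK, norm_smul_inv_norm hx0, ?_⟩
      rw [map_smul, norm_smul, norm_inv, RCLike.norm_ofReal, abs_norm,
        le_inv_mul_iff₀ (norm_pos_iff.2 hx0), mul_comm]
      exact hx.le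
  obtain ⟨n, hn⟩ := exists_norm_apply_lt_of_orthonormal T hT he hε
  exact (hTe n).not_gt hn

theorem exists_isCompactOperator_norm_sub_le (T : H →ₗ[𝕜] Y) (K : Submodule 𝕜 H)
    [FiniteDimensional 𝕜 K] {ε : ℝ} (hε : 0 ≤ ε) (hK : ∀ x ∈ Kᗮ, ‖T x‖ ≤ ε * ‖x‖) :
    ∃ S : H →L[𝕜] Y, IsCompactOperator S ∧ ∀ x, ‖T x - S x‖ ≤ ε * ‖x‖ := by
  let TK : K →L[𝕜] Y := LinearMap.toContinuousLinearMap (T ∘ₗ K.subtype)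
  let S : H →L[𝕜] Y := TK.comp K.orthogonalProjectionOnto
  refine ⟨S, (isCompactOperator_of_locallyCompactSpace_rng TK).comp_clm _, fun x => ?_⟩
  have hx : T x - S x = T (Kᗮ.starProjection x) := by
    rw [Submodule.starProjection_orthogonal_val, map_sub]
    rfl
  rw [hx]
  exact (hK _ (Kᗮ.starProjection_apply_mem x)).trans
    (mul_le_mul_of_nonneg_left (Kᗮ.norm_starProjection_apply_le x) hε)

end InnerProductSpace

theorem compact_iff_image_of_orthonormal_sets_relatively_compact_general
    {𝕜 H Y : Type*} [RCLike 𝕜] [NormedAddCommGroup H] [InnerProductSpace 𝕜 H]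
    [NormedAddCommGroup Y] [NormedSpace 𝕜 Y] [CompleteSpace Y]
    (T : H →ₗ[𝕜] Y) :
    (Continuous T ∧ IsCompact (closure (T '' Metric.closedBall (0 : H) 1))) ↔
      ∀ S : Set H, Orthonormal 𝕜 ((↑) : S → H) → IsCompact (closure (T '' S)) := by
  constructor
  · rintro ⟨-, hball⟩ S hS
    refine hball.of_isClosed_subset isClosed_closure (closure_mono (Set.image_mono ?_))
    intro x hx
    simpa using (hS.norm_eq_one ⟨x, hx⟩).le
  · intro hT
    have hcomp : IsCompactOperator T := T.isCompactOperator_of_forall_norm_sub_le fun ε hε => by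
      obtain ⟨K, hKfin, hK⟩ := exists_finiteDimensional_norm_apply_le_of_mem_orthogonal T hT hε
      exact exists_isCompactOperator_norm_sub_le T K hε.le hK
    exact ⟨hcomp.continuous, hcomp.isCompact_closure_image_closedBall 1⟩

theorem compact_iff_image_of_orthonormal_sets_relatively_compact
    {𝕜 H Y : Type*} [RCLike 𝕜] [NormedAddCommGroup H] [InnerProductSpace 𝕜 H]
    [CompleteSpace H] [NormedAddCommGroup Y] [NormedSpace 𝕜 Y] [CompleteSpace Y]
    (T : H →ₗ[𝕜] Y) :
    (Continuous T ∧ IsCompact (closure (T '' Metric.closedBall (0 : H) 1))) ↔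
      ∀ S : Set H, Orthonormal 𝕜 ((↑) : S → H) → IsCompact (closure (T '' S)) :=
  compact_iff_image_of_orthonormal_sets_relatively_compact_general T
end

section
/- For a bounded linear operator T : H → Y from a Hilbert space H to a Banach space Y, the following are equivalent: (a) ‖T x_n‖ → 0 for every orthonormal sequence (x_n) in H; (b) for every orthonormal (Hilbert) basis A of H and every ε > 0, the set {a ∈ A : ‖T a‖ ≥ ε} is finite. -/
open Filter

theorem norm_null_orthonormal_iff_finite_large_on_bases
    {𝕜 H Y : Type*} [RCLike 𝕜] [NormedAddCommGroup H] [InnerProductSpace 𝕜 H]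
    [CompleteSpace H] [NormedAddCommGroup Y] [NormedSpace 𝕜 Y] [CompleteSpace Y]
    (T : H →L[𝕜] Y) :
    (∀ x : ℕ → H, Orthonormal 𝕜 x → Tendsto (fun n => ‖T (x n)‖) atTop (nhds 0)) ↔
      ∀ A : Set H,
        (Orthonormal 𝕜 ((↑) : A → H) ∧
          ∀ B : Set H, A ⊆ B → Orthonormal 𝕜 ((↑) : B → H) → B = A) →
        ∀ ε > (0 : ℝ), {a ∈ A | ε ≤ ‖T a‖}.Finite := by
  constructor
  · intro h A hA ε hε
    by_contra hinf
    replace hinf : {a ∈ A | ε ≤ ‖T a‖}.Infinite := hinf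
    set f := hinf.natEmbedding with hf
    have hg : Function.Injective (fun n => (⟨(f n).1, (f n).2.1⟩ : A)) := by
      intro n m hnm
      apply f.injective
      ext
      simpa using congrArg Subtype.val hnm
    have hx : Orthonormal 𝕜 (fun n => ((f n : H))) := hA.1.comp _ hg
    have := (h _ hx).eventually (eventually_lt_nhds hε)
    obtain ⟨n, hn⟩ := this.exists
    exact absurd (f n).2.2 (not_le.mpr hn)
  · intro h x hx
    by_contra hT
    have key : ∃ ε > 0, {n | ε ≤ ‖T (x n)‖}.Infinite := by
      rw [Metric.tendsto_atTop] at hT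
      push_neg at hT
      obtain ⟨ε, hε, hN⟩ := hT
      refine ⟨ε, hε, Set.infinite_of_not_bddAbove ?_⟩
      rintro ⟨N, hNb⟩
      obtain ⟨n, hn, hdist⟩ := hN (N + 1)
      have : ε ≤ ‖T (x n)‖ := by
        rw [Real.dist_eq, sub_zero, abs_of_nonneg (norm_nonneg _)] at hdist
        exact hdist
      exact absurd (hNb this) (by omega)
    obtain ⟨ε, hε, hinf⟩ := key
    obtain ⟨w, hws, hw_on, hw_max⟩ := exists_maximal_orthonormal hx.toSubtypeRange
    have hfin := h w ⟨hw_on, hw_max⟩ ε hε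
    have hxinj : Function.Injective x := hx.linearIndependent.injective
    have : (x '' {n | ε ≤ ‖T (x n)‖}).Infinite := hinf.image (hxinj.injOn)
    refine this (hfin.subset ?_)
    rintro _ ⟨n, hn, rfl⟩
    exact ⟨hws ⟨n, rfl⟩, hn⟩
end

section
/- A bounded linear operator T : H → Y from a Hilbert space H to a Banach space Y is compact if and only if T maps every orthonormal basis of H into a relatively compact subset of Y. -/
/-! If `T` is not compact, there is `c > 0` such that `‖T u‖ ≤ c ‖u‖` fails on `Kᗮ` for every
finite-dimensional `K` (otherwise `T(B_H)` lies within `c` of the compact set `T(B_K)`). Choosing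
unit vectors orthogonal to the previous ones gives an orthonormal sequence with `‖T eₙ‖ > c`;
extend it to an orthonormal basis. If its image were relatively compact, infinitely many `T eₙ`
would lie within `c/4` of a single `z`, so `‖z‖ ≥ 3c/4`; the sum of `n` of those `eₙ` has norm
`√n` while its image has norm at least `n c/2`, which contradicts the boundedness of `T` for
large `n`. -/

open Set Metric Filter Topology Finset

lemma Set.Infinite.exists_infinite_subset_forall_dist_lt {ι X : Type*} [PseudoMetricSpace X]
    {f : ι → X} {S : Set ι} (hS : S.Infinite) (hf : TotallyBounded (f '' S)) {ε : ℝ}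
    (hε : 0 < ε) : ∃ y : X, ∃ I ⊆ S, I.Infinite ∧ ∀ i ∈ I, dist (f i) y < ε := by
  obtain ⟨t, ht, hcover⟩ := totallyBounded_iff.1 hf ε hε
  have hS_cover : S ⊆ ⋃ y ∈ t, S ∩ f ⁻¹' ball y ε := fun i hi => by
    simpa [hi] using hcover (mem_image_of_mem f hi)
  obtain ⟨y, -, hy⟩ : ∃ y ∈ t, (S ∩ f ⁻¹' ball y ε).Infinite := by
    by_contra! h
    exact hS ((ht.biUnion h).subset hS_cover)
  exact ⟨y, _, inter_subset_left, hy, fun i hi => hi.2⟩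

section

variable {𝕜 H Y : Type*} [RCLike 𝕜] [NormedAddCommGroup H] [InnerProductSpace 𝕜 H]
  [NormedAddCommGroup Y] [NormedSpace 𝕜 Y]

lemma Orthonormal.norm_sum_sq {ι : Type*} {e : ι → H} (he : Orthonormal 𝕜 e) (s : Finset ι) :
    ‖∑ i ∈ s, e i‖ ^ 2 = #s := by
  have h := he.inner_sum (fun _ => 1) (fun _ => 1) s
  simp only [one_smul, map_one, mul_one, sum_const, nsmul_eq_mul] at h
  rw [← RCLike.ofReal_inj (K := 𝕜), RCLike.ofReal_pow, ← inner_self_eq_norm_sq_to_K, h]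
  simp

lemma Orthonormal.card_mul_sq_le_sq_opNorm {ι : Type*} {e : ι → H} (he : Orthonormal 𝕜 e)
    (T : H →L[𝕜] Y) {t : Finset ι} {z : Y} {r : ℝ} (hr : r ≤ ‖z‖)
    (hz : ∀ i ∈ t, ‖T (e i) - z‖ ≤ r) : #t * (‖z‖ - r) ^ 2 ≤ ‖T‖ ^ 2 := by
  set w := ∑ i ∈ t, e i
  have h_lower : #t * (‖z‖ - r) ≤ ‖T w‖ := by
    have h_dev : ‖T w - (#t : 𝕜) • z‖ ≤ #t * r := by
      rw [map_sum, Nat.cast_smul_eq_nsmul, ← sum_const, ← sum_sub_distrib]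
      exact (norm_sum_le _ _).trans (by simpa using sum_le_sum hz)
    have h_norm : ‖(#t : 𝕜) • z‖ = #t * ‖z‖ := by rw [norm_smul, RCLike.norm_natCast]
    linarith [norm_sub_norm_le ((#t : 𝕜) • z) (T w), norm_sub_rev (T w) ((#t : 𝕜) • z)]
  have h_upper : ‖T w‖ ^ 2 ≤ ‖T‖ ^ 2 * #t := by
    rw [← he.norm_sum_sq, ← mul_pow]
    gcongr
    exact T.le_opNorm w
  rcases (#t).eq_zero_or_pos with h0 | hpos
  · simp [h0]
  · have hpos' : (0 : ℝ) < #t := by exact_mod_cast hpos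
    have h_sq : (#t * (‖z‖ - r)) ^ 2 ≤ ‖T w‖ ^ 2 := by gcongr
    nlinarith

lemma Orthonormal.tendsto_cofinite_zero_of_totallyBounded {ι : Type*} {e : ι → H}
    (he : Orthonormal 𝕜 e) (T : H →L[𝕜] Y) (h : TotallyBounded (range fun i => T (e i))) :
    Tendsto (fun i => T (e i)) cofinite (𝓝 0) := by
  rw [Metric.tendsto_nhds]
  intro c hc
  rw [eventually_cofinite]
  by_contra hS
  obtain ⟨y, I, hIS, hI, hy⟩ := Set.Infinite.exists_infinite_subset_forall_dist_lt hS
    (h.subset (image_subset_range _ _)) (by positivity : 0 < c / 4)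
  simp only [dist_eq_norm] at hy
  have hy_norm : 3 * c / 4 ≤ ‖y‖ := by
    obtain ⟨i, hi⟩ := hI.nonempty
    have hTi : c ≤ ‖T (e i)‖ := by simpa using hIS hi
    linarith [norm_le_norm_add_norm_sub' (T (e i)) y, hy i hi, norm_sub_rev y (T (e i))]
  obtain ⟨n, hn⟩ := exists_nat_gt (‖T‖ ^ 2 / (c / 2) ^ 2)
  obtain ⟨t, htI, rfl⟩ := hI.exists_subset_card_eq n
  have hbound := he.card_mul_sq_le_sq_opNorm T (t := t) (r := c / 4) (by linarith)
    fun i hi => (hy i (htI hi)).le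
  rw [div_lt_iff₀ (by positivity)] at hn
  have hsq : (c / 2) ^ 2 ≤ (‖y‖ - c / 4) ^ 2 := pow_le_pow_left₀ (by positivity) (by linarith) 2
  linarith [mul_le_mul_of_nonneg_left hsq (Nat.cast_nonneg (α := ℝ) #t)]

lemma totallyBounded_image_closedBall_of_forall_orthogonal (T : H →L[𝕜] Y)
    (h : ∀ c > 0, ∃ K : Submodule 𝕜 H, FiniteDimensional 𝕜 K ∧ ∀ u ∈ Kᗮ, ‖T u‖ ≤ c * ‖u‖) :
    TotallyBounded (T '' closedBall 0 1) := by
  rw [totallyBounded_iff]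
  intro ε hε
  obtain ⟨K, hK, hTK⟩ := h (ε / 2) (by positivity)
  have hC : IsCompact ((fun v : K => T v) '' closedBall 0 1) :=
    (isCompact_closedBall 0 1).image (T.continuous.comp continuous_subtype_val)
  obtain ⟨t, ht, hnet⟩ := totallyBounded_iff.1 hC.totallyBounded (ε / 2) (by positivity)
  refine ⟨t, ht, ?_⟩
  rintro _ ⟨x, hx, rfl⟩
  rw [mem_closedBall_zero_iff] at hx
  have hPx : K.orthogonalProjectionOnto x ∈ closedBall 0 1 := by
    rw [mem_closedBall_zero_iff]
    exact (K.norm_orthogonalProjectionOnto_apply_le x).trans hx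
  obtain ⟨y, hyt, hy⟩ := mem_iUnion₂.1 (hnet (mem_image_of_mem _ hPx))
  refine mem_iUnion₂.2 ⟨y, hyt, ?_⟩
  have hres : ‖T (x - K.starProjection x)‖ ≤ ε / 2 := by
    rw [← K.starProjection_orthogonal_val]
    calc ‖T (Kᗮ.starProjection x)‖ ≤ ε / 2 * ‖Kᗮ.starProjection x‖ :=
          hTK _ (Kᗮ.starProjection_apply_mem x)
      _ ≤ ε / 2 * 1 := by gcongr; exact (Kᗮ.norm_starProjection_apply_le x).trans hx
      _ = ε / 2 := mul_one _
  rw [mem_ball, K.coe_orthogonalProjectionOnto_apply] at hy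
  rw [mem_ball]
  calc dist (T x) y ≤ dist (T x) (T (K.starProjection x)) + dist (T (K.starProjection x)) y :=
        dist_triangle _ _ _
    _ < ε := by rw [dist_eq_norm, ← map_sub]; linarith

lemma exists_orthonormal_seq_of_forall_orthogonal (p : H → Prop)
    (hp : ∀ K : Submodule 𝕜 H, FiniteDimensional 𝕜 K → ∃ u ∈ Kᗮ, ‖u‖ = 1 ∧ p u) :
    ∃ e : ℕ → H, Orthonormal 𝕜 e ∧ ∀ n, p (e n) := by
  have : Std.Symm fun a b : H => inner 𝕜 a b = 0 := ⟨fun _ _ => inner_eq_zero_symm.1⟩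
  obtain ⟨e, he, horth⟩ := exists_seq_of_forall_finset_exists' (fun u => ‖u‖ = 1 ∧ p u)
    (fun a b : H => inner 𝕜 a b = 0) fun s _ => by
      obtain ⟨u, hu, hpu⟩ := hp (Submodule.span 𝕜 s) inferInstance
      exact ⟨u, hpu, fun a ha => Submodule.inner_right_of_mem_orthogonal
        (Submodule.subset_span ha) hu⟩
  exact ⟨e, ⟨fun n => (he n).1, fun _ _ hij => horth hij⟩, fun n => (he n).2⟩

lemma exists_orthonormal_seq_lt_norm_apply_of_not_totallyBounded (T : H →L[𝕜] Y)
    (hT : ¬TotallyBounded (T '' closedBall 0 1)) :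
    ∃ c > 0, ∃ e : ℕ → H, Orthonormal 𝕜 e ∧ ∀ n, c < ‖T (e n)‖ := by
  obtain ⟨c, hc, hK⟩ : ∃ c > 0, ∀ K : Submodule 𝕜 H, FiniteDimensional 𝕜 K →
      ∃ u ∈ Kᗮ, c * ‖u‖ < ‖T u‖ := by
    by_contra! h
    exact hT (totallyBounded_image_closedBall_of_forall_orthogonal T h)
  refine ⟨c, hc, exists_orthonormal_seq_of_forall_orthogonal (fun u => c < ‖T u‖)
    fun K hK_fin => ?_⟩
  obtain ⟨u, huK, hTu⟩ := hK K hK_fin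
  have hu : u ≠ 0 := by rintro rfl; simp at hTu
  refine ⟨(‖u‖⁻¹ : 𝕜) • u, Kᗮ.smul_mem _ huK, norm_smul_inv_norm hu, ?_⟩
  rwa [map_smul, norm_smul, norm_inv, RCLike.norm_ofReal, abs_norm, inv_mul_eq_div,
    lt_div_iff₀ (norm_pos_iff.2 hu)]

end

theorem compact_iff_image_of_orthonormal_bases_relatively_compact_general
    {𝕜 H Y : Type*} [RCLike 𝕜] [NormedAddCommGroup H] [InnerProductSpace 𝕜 H]
    [NormedAddCommGroup Y] [NormedSpace 𝕜 Y] [CompleteSpace Y]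
    (T : H →L[𝕜] Y) :
    IsCompact (closure (T '' Metric.closedBall (0 : H) 1)) ↔
      ∀ A : Set H,
        (Orthonormal 𝕜 ((↑) : A → H) ∧
          ∀ B : Set H, A ⊆ B → Orthonormal 𝕜 ((↑) : B → H) → B = A) →
        IsCompact (closure (T '' A)) := by
  refine ⟨fun hT A hA => ?_, fun h => ?_⟩
  · have hA_ball : A ⊆ closedBall 0 1 := fun a ha => by simpa using (hA.1.1 ⟨a, ha⟩).le
    exact hT.of_isClosed_subset isClosed_closure (closure_mono (image_mono hA_ball))
  by_contra hT
  obtain ⟨c, hc, e, he, hTe⟩ := exists_orthonormal_seq_lt_norm_apply_of_not_totallyBounded T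
    fun htb => hT (htb.closure.isCompact_of_isClosed isClosed_closure)
  obtain ⟨A, hA_sub, hA_on, hA_max⟩ := exists_maximal_orthonormal he.toSubtypeRange
  have h_range : range (fun n => T (e n)) ⊆ closure (T '' A) := by
    rintro _ ⟨n, rfl⟩
    exact subset_closure (mem_image_of_mem T (hA_sub (mem_range_self n)))
  have h_tendsto := he.tendsto_cofinite_zero_of_totallyBounded T
    ((h A ⟨hA_on, hA_max⟩).totallyBounded.subset h_range)
  obtain ⟨n, hn⟩ := (h_tendsto.eventually (ball_mem_nhds 0 hc)).exists
  exact (hTe n).not_gt (mem_ball_zero_iff.1 hn)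

theorem compact_iff_image_of_orthonormal_bases_relatively_compact
    {𝕜 H Y : Type*} [RCLike 𝕜] [NormedAddCommGroup H] [InnerProductSpace 𝕜 H]
    [CompleteSpace H] [NormedAddCommGroup Y] [NormedSpace 𝕜 Y] [CompleteSpace Y]
    (T : H →L[𝕜] Y) :
    IsCompact (closure (T '' Metric.closedBall (0 : H) 1)) ↔
      ∀ A : Set H,
        (Orthonormal 𝕜 ((↑) : A → H) ∧
          ∀ B : Set H, A ⊆ B → Orthonormal 𝕜 ((↑) : B → H) → B = A) →
        IsCompact (closure (T '' A)) :=
  compact_iff_image_of_orthonormal_bases_relatively_compact_general T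
end

section
/- If a bounded linear operator T : H → Y from a Hilbert space to a Banach space maps every orthonormal sequence of H to a norm-null sequence, then T maps every orthonormal subset of H into a relatively compact subset of Y. -/
open Filter

theorem image_orthonormal_set_relatively_compact_of_norm_null
    {𝕜 H Y : Type*} [RCLike 𝕜] [NormedAddCommGroup H] [InnerProductSpace 𝕜 H]
    [CompleteSpace H] [NormedAddCommGroup Y] [NormedSpace 𝕜 Y] [CompleteSpace Y]
    (T : H →L[𝕜] Y)
    (h : ∀ x : ℕ → H, Orthonormal 𝕜 x → Tendsto (fun n => ‖T (x n)‖) atTop (nhds 0)) :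
    ∀ S : Set H, Orthonormal 𝕜 ((↑) : S → H) → IsCompact (closure (T '' S)) := by
  intro S hS
  apply TotallyBounded.isCompact_of_isClosed _ isClosed_closure
  apply TotallyBounded.closure
  rw [Metric.totallyBounded_iff]
  intro ε hε
  set F : Set H := {x ∈ S | ε ≤ ‖T x‖} with hF
  have hFfin : F.Finite := by
    by_contra hinf
    have hinf' : F.Infinite := hinf
    obtain f := hinf'.natEmbedding
    set g : ℕ → S := fun n => ⟨(f n : H), (f n).2.1⟩ with hg
    have hginj : Function.Injective g := by
      intro a b hab
      have hval : ((f a : H)) = ((f b : H)) := congrArg (fun z : S => (z : H)) hab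
      exact f.injective (Subtype.ext hval)
    have horth : Orthonormal 𝕜 (((↑) : S → H) ∘ g) := hS.comp g hginj
    have hlim := h _ horth
    have hge : ∀ n : ℕ, ε ≤ ‖T ((((↑) : S → H) ∘ g) n)‖ := fun n => (f n).2.2
    have : ε ≤ 0 := ge_of_tendsto' hlim hge
    linarith
  refine ⟨insert 0 (T '' F), (hFfin.image T).insert 0, ?_⟩
  rintro y ⟨x, hxS, rfl⟩
  by_cases hx : ε ≤ ‖T x‖
  · exact Set.mem_biUnion (Set.mem_insert_of_mem _ ⟨x, ⟨hxS, hx⟩, rfl⟩)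
      (Metric.mem_ball_self hε)
  · exact Set.mem_biUnion (Set.mem_insert _ _)
      (by simpa [dist_eq_norm] using lt_of_not_ge hx)
end

section
/- Every bounded linear operator T : H → K between Hilbert spaces that is limited (T(B_H) is a limited set) is compact. -/
/-!
A limited set `A` in a Hilbert space is bounded, and it is totally bounded: otherwise, for some
`ε > 0`, no finite-dimensional subspace comes within `ε` of all of `A`, so one can pick points
`a n ∈ A` each at distance `≥ ε` from the span of the previous ones. Gram–Schmidt turns them into
an orthonormal sequence `e n` with `‖⟪e n, a n⟫‖ ≥ ε`; by Bessel's inequality the functionals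
`⟪e n, ·⟫` are weak*-null, contradicting limitedness. Hence `T '' closedBall 0 1` has compact
closure in the complete space `K`.
-/

open Filter

section

open Metric Bornology Submodule

theorem IsLimited.isBounded_s15 {𝕜 X : Type*} [RCLike 𝕜] [NormedAddCommGroup X] [NormedSpace 𝕜 X]
    {A : Set X} (hA : IsLimited 𝕜 A) : IsBounded A := by
  rw [isBounded_iff_forall_norm_le]
  by_contra! hunb
  choose a haA ha using fun n : ℕ => hunb (n ^ 2)
  have ha0 : ∀ n, ‖a n‖ ≠ 0 := fun n => ((sq_nonneg _).trans_lt (ha n)).ne'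
  choose g hg_norm hg using fun n => exists_dual_vector 𝕜 (a n) (ha0 n)
  have hbound : ∀ (n : ℕ) x, ‖((n : 𝕜)⁻¹ • g n) x‖ ≤ ‖x‖ / n := fun n x => by
    simpa [div_eq_inv_mul, norm_smul, hg_norm] using
      mul_le_mul_of_nonneg_left ((g n).le_opNorm x) (inv_nonneg.2 (Nat.cast_nonneg n))
  -- `g n / n`, with `g n` norming `a n`, is weak*-null but large at `a n` as `‖a n‖ > n ^ 2`.
  obtain ⟨N, hN⟩ := hA (fun n => (n : 𝕜)⁻¹ • g n) (fun x => squeeze_zero_norm (hbound · x)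
    (tendsto_const_div_atTop_nhds_zero_nat ‖x‖)) 1 one_pos
  have key := hN (N + 1) N.le_succ _ (haA (N + 1))
  rw [smul_apply, hg, norm_smul, norm_inv, RCLike.norm_natCast,
    RCLike.norm_ofReal, abs_norm, inv_mul_lt_iff₀ (by positivity), mul_one] at key
  have h1 : (1 : ℝ) ≤ (N + 1 : ℕ) := Nat.one_le_cast.2 N.succ_pos
  nlinarith [ha (N + 1)]

theorem totallyBounded_of_forall_subset_thickening {α : Type*} [PseudoMetricSpace α] {A : Set α}
    (h : ∀ ε > 0, ∃ B, TotallyBounded B ∧ A ⊆ thickening ε B) : TotallyBounded A := by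
  refine totallyBounded_iff.2 fun ε hε => ?_
  obtain ⟨B, hB, hAB⟩ := h (ε / 2) (half_pos hε)
  obtain ⟨t, ht, hBt⟩ := totallyBounded_iff.1 hB (ε / 2) (half_pos hε)
  refine ⟨t, ht, fun a ha => ?_⟩
  obtain ⟨b, hb, hab⟩ := mem_thickening_iff.1 (hAB ha)
  obtain ⟨y, hy, hby⟩ := Set.mem_iUnion₂.1 (hBt hb)
  exact Set.mem_iUnion₂.2 ⟨y, hy, mem_ball.2 (by linarith [dist_triangle a b y, mem_ball.1 hby])⟩

variable {𝕜 E : Type*} [RCLike 𝕜] [NormedAddCommGroup E] [InnerProductSpace 𝕜 E]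

local notation "⟪" x ", " y "⟫" => inner 𝕜 x y

theorem Orthonormal.tendsto_inner_cofinite_zero {ι : Type*} {e : ι → E} (he : Orthonormal 𝕜 e)
    (x : E) : Tendsto (fun i => ⟪e i, x⟫) cofinite (nhds 0) := by
  have hsq := (he.inner_products_summable x).tendsto_cofinite_zero
  rw [tendsto_zero_iff_norm_tendsto_zero]
  simpa [Real.sqrt_sq (norm_nonneg _)] using hsq.sqrt

theorem IsLimited.exists_forall_norm_inner_lt {A : Set E} (hA : IsLimited 𝕜 A) {e : ℕ → E}
    (he : Orthonormal 𝕜 e) {ε : ℝ} (hε : 0 < ε) : ∃ N, ∀ n ≥ N, ∀ a ∈ A, ‖⟪e n, a⟫‖ < ε :=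
  hA (fun n => innerSL 𝕜 (e n))
    (fun x => by simpa [← Nat.cofinite_eq_atTop] using he.tendsto_inner_cofinite_zero x) ε hε

theorem orthonormal_normalize_of_pairwise_inner_eq_zero {ι : Type*} {v : ι → E}
    (hv0 : ∀ i, v i ≠ 0) (hv : Pairwise fun i j => ⟪v i, v j⟫ = 0) :
    Orthonormal 𝕜 fun i => (‖v i‖⁻¹ : 𝕜) • v i :=
  ⟨fun i => norm_smul_inv_norm (hv0 i), fun i j hij => by
    simp [inner_smul_left, inner_smul_right, hv hij]⟩

theorem Submodule.inner_sub_starProjection_self (K : Submodule 𝕜 E) [K.HasOrthogonalProjection]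
    (v : E) : ⟪v - K.starProjection v, v⟫ = (‖v - K.starProjection v‖ ^ 2 : 𝕜) := by
  rw [← inner_self_eq_norm_sq_to_K, inner_sub_right (v - K.starProjection v) v,
    starProjection_inner_eq_zero v _ (K.starProjection_apply_mem v), sub_zero]

theorem Submodule.totallyBounded_starProjection_image (K : Submodule 𝕜 E) [FiniteDimensional 𝕜 K]
    {A : Set E} (hA : IsBounded A) : TotallyBounded (K.starProjection '' A) := by
  have : TotallyBounded (K.orthogonalProjectionOnto '' A) :=
    ((hA.image K.orthogonalProjectionOnto).isCompact_closure.totallyBounded).subset subset_closure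
  rw [funext K.starProjection_apply, ← Set.image_image]
  exact this.image uniformContinuous_subtype_val

theorem exists_orthonormal_forall_exists_le_norm_inner {A : Set E} {ε : ℝ} (hε : 0 < ε)
    (h : ∀ s : Finset E, ∃ a ∈ A, ε ≤ ‖a - (span 𝕜 (s : Set E)).starProjection a‖) :
    ∃ e : ℕ → E, Orthonormal 𝕜 e ∧ ∀ n, ∃ a ∈ A, ε ≤ ‖⟪e n, a⟫‖ := by
  classical
  choose pick hpickA hpick using h
  obtain ⟨s, hs⟩ : ∃ s : ℕ → Finset E, ∀ n, s (n + 1) = insert (pick (s n)) (s n) :=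
    ⟨fun n => Nat.rec ∅ (fun _ t => insert (pick t) t) n, fun _ => rfl⟩
  let K : ℕ → Submodule 𝕜 E := fun n => span 𝕜 (s n : Set E)
  let w : ℕ → E := fun n => pick (s n) - (K n).starProjection (pick (s n))
  have hK : Monotone K := monotone_nat_of_le_succ fun n =>
    span_mono (by simp only [hs, Finset.coe_insert]; exact Set.subset_insert _ _)
  have hw_mem : ∀ n, w n ∈ K (n + 1) := fun n =>
    sub_mem (subset_span (by simp [hs])) (hK n.le_succ (starProjection_apply_mem _ _))
  have hw_orth : ∀ n, w n ∈ (K n)ᗮ := fun n => sub_starProjection_mem_orthogonal _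
  have hw_ne : ∀ n, w n ≠ 0 := fun n => norm_pos_iff.1 (hε.trans_le (hpick _))
  have hw_pair : Pairwise fun m n => ⟪w m, w n⟫ = 0 := by
    intro m n hmn
    rcases hmn.lt_or_gt with hlt | hlt
    · exact inner_eq_zero_symm.1 ((mem_orthogonal' _ _).1 (hw_orth n) _ (hK hlt (hw_mem m)))
    · exact (mem_orthogonal' _ _).1 (hw_orth m) _ (hK hlt (hw_mem n))
  refine ⟨_, orthonormal_normalize_of_pairwise_inner_eq_zero hw_ne hw_pair,
    fun n => ⟨pick (s n), hpickA _, ?_⟩⟩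
  rw [inner_smul_left, inner_sub_starProjection_self]
  have hw : ‖w n‖ ≠ 0 := norm_ne_zero_iff.2 (hw_ne n)
  simpa [sq, ← mul_assoc, hw, w] using hpick (s n)

theorem totallyBounded_of_orthonormal_inner_tendsto_zero_uniformly {A : Set E} (hA : IsBounded A)
    (h : ∀ e : ℕ → E, Orthonormal 𝕜 e → ∀ ε > 0, ∃ N, ∀ n ≥ N, ∀ a ∈ A, ‖⟪e n, a⟫‖ < ε) :
    TotallyBounded A := by
  refine totallyBounded_of_forall_subset_thickening fun ε hε => ?_
  suffices ∃ s : Finset E, ∀ a ∈ A, ‖a - (span 𝕜 (s : Set E)).starProjection a‖ < ε by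
    obtain ⟨s, hs⟩ := this
    refine ⟨_, (span 𝕜 (s : Set E)).totallyBounded_starProjection_image hA, fun a ha => ?_⟩
    exact mem_thickening_iff.2 ⟨_, Set.mem_image_of_mem _ ha, by rw [dist_eq_norm]; exact hs a ha⟩
  by_contra! hfar
  obtain ⟨e, he, hlarge⟩ := exists_orthonormal_forall_exists_le_norm_inner hε hfar
  obtain ⟨N, hN⟩ := h e he ε hε
  obtain ⟨a, ha, hle⟩ := hlarge N
  exact (hN N le_rfl a ha).not_ge hle

theorem IsLimited.totallyBounded {A : Set E} (hA : IsLimited 𝕜 A) : TotallyBounded A :=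
  totallyBounded_of_orthonormal_inner_tendsto_zero_uniformly hA.isBounded_s15 fun _ he _ hε =>
    hA.exists_forall_norm_inner_lt he hε

end

theorem limited_operator_between_hilbert_spaces_is_compact_general
    {𝕜 H K : Type*} [RCLike 𝕜] [NormedAddCommGroup H] [InnerProductSpace 𝕜 H]
    [NormedAddCommGroup K] [InnerProductSpace 𝕜 K]
    [CompleteSpace K] (T : H →L[𝕜] K)
    (h : IsLimited 𝕜 (T '' Metric.closedBall (0 : H) 1)) :
    IsCompact (closure (T '' Metric.closedBall (0 : H) 1)) :=
  h.totallyBounded.closure.isCompact_of_isClosed isClosed_closure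

theorem limited_operator_between_hilbert_spaces_is_compact
    {𝕜 H K : Type*} [RCLike 𝕜] [NormedAddCommGroup H] [InnerProductSpace 𝕜 H]
    [CompleteSpace H] [NormedAddCommGroup K] [InnerProductSpace 𝕜 K]
    [CompleteSpace K] (T : H →L[𝕜] K)
    (h : IsLimited 𝕜 (T '' Metric.closedBall (0 : H) 1)) :
    IsCompact (closure (T '' Metric.closedBall (0 : H) 1)) :=
  limited_operator_between_hilbert_spaces_is_compact_general T h
end

section
/- If a bounded linear operator T : H → Y from a Hilbert space to a Banach space maps every orthonormal sequence of H onto a limited subset of Y, then T is a limited operator, i.e., T(B_H) is limited in Y. -/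
open Filter

/-! If `f n` is weak*-null but not uniformly small on `T (B_H)`, the functionals `(f n).comp T`
are pointwise null yet frequently of size `≥ ε` somewhere on the unit ball. They converge uniformly
on every finite-dimensional subspace, so at a late enough index the component of such a point
orthogonal to the vectors chosen so far still has value `≥ ε / 2`; normalizing it gives the next
vector of an orthonormal sequence `e` with `‖f (m k) (T (e k))‖ ≥ ε / 2` along indices `m k → ∞`,
which contradicts the limitedness of `{T (e k)}`. -/

open Topology

theorem tendsto_clm_of_tendsto_apply {𝕜 E F ι : Type*} [NontriviallyNormedField 𝕜]
    [CompleteSpace 𝕜] [NormedAddCommGroup E] [NormedSpace 𝕜 E] [FiniteDimensional 𝕜 E]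
    [NormedAddCommGroup F] [NormedSpace 𝕜 F] {l : Filter ι} {f : ι → E →L[𝕜] F}
    {g : E →L[𝕜] F} (h : ∀ y, Tendsto (fun i ↦ f i y) l (𝓝 (g y))) :
    Tendsto f l (𝓝 g) := by
  let e : (E →L[𝕜] F) ≃L[𝕜] Fin (Module.finrank 𝕜 E) → F :=
    ((ContinuousLinearEquiv.ofFinrankEq (Module.finrank_fin_fun 𝕜).symm).arrowCongr
      (1 : F ≃L[𝕜] F)).trans (ContinuousLinearEquiv.piRing _)
  rw [e.toHomeomorph.isInducing.tendsto_nhds_iff]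
  exact tendsto_pi_nhds.mpr fun _ ↦ h _

section

variable {𝕜 E F : Type*} [RCLike 𝕜] [NormedAddCommGroup E] [InnerProductSpace 𝕜 E]
  [NormedAddCommGroup F] [NormedSpace 𝕜 F]

theorem exists_mem_orthogonal_norm_eq_one_sub_le_norm_apply (K : Submodule 𝕜 E)
    [K.HasOrthogonalProjection] (g : E →L[𝕜] F) {x : E} (hx : ‖x‖ ≤ 1) {δ : ℝ}
    (hgK : ‖g.comp K.subtypeL‖ ≤ δ) (hδ : δ < ‖g x‖) :
    ∃ e ∈ Kᗮ, ‖e‖ = 1 ∧ ‖g x‖ - δ ≤ ‖g e‖ := by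
  set w := Kᗮ.starProjection x
  have hgP : ‖g (K.starProjection x)‖ ≤ δ :=
    calc ‖(g.comp K.subtypeL) (K.orthogonalProjectionOnto x)‖
        ≤ ‖g.comp K.subtypeL‖ * ‖K.orthogonalProjectionOnto x‖ := g.comp K.subtypeL |>.le_opNorm _
      _ ≤ δ * 1 := by
        gcongr
        · exact (norm_nonneg _).trans hgK
        · exact (K.norm_orthogonalProjectionOnto_apply_le x).trans hx
      _ = δ := mul_one δ
  have hgw : ‖g x‖ - δ ≤ ‖g w‖ := by
    have hsplit : g x = g (K.starProjection x) + g w := by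
      rw [← map_add, K.starProjection_add_starProjection_orthogonal]
    have htri := hsplit ▸ norm_add_le (g (K.starProjection x)) (g w)
    linarith
  have hw : 0 < ‖w‖ := norm_pos_iff.2 fun hw ↦ by
    rw [hw, map_zero, norm_zero] at hgw
    linarith
  refine ⟨(‖w‖⁻¹ : 𝕜) • w, Submodule.smul_mem _ _ (Kᗮ.starProjection_apply_mem x), ?_, ?_⟩
  · rw [norm_smul, norm_inv, RCLike.norm_ofReal, abs_norm, inv_mul_cancel₀ hw.ne']
  · have hw_le : ‖w‖ ≤ 1 := (Kᗮ.norm_starProjection_apply_le x).trans hx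
    rw [map_smul, norm_smul, norm_inv, RCLike.norm_ofReal, abs_norm]
    exact hgw.trans (le_mul_of_one_le_left (norm_nonneg _) ((one_le_inv₀ hw).2 hw_le))

theorem exists_orthonormal_half_le_norm_apply_of_frequently {g : ℕ → E →L[𝕜] F}
    (hg : ∀ x, Tendsto (fun n ↦ g n x) atTop (𝓝 0)) {ε : ℝ} (hε : 0 < ε)
    (hfreq : ∃ᶠ n in atTop, ∃ x, ‖x‖ ≤ 1 ∧ ε ≤ ‖g n x‖) :
    ∃ (m : ℕ → ℕ) (e : ℕ → E), StrictMono m ∧ Orthonormal 𝕜 e ∧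
      ∀ k, ε / 2 ≤ ‖g (m k) (e k)‖ := by
  classical
  obtain ⟨p, hp, hrel⟩ := exists_seq_of_forall_finset_exists
    (fun p : ℕ × E ↦ ‖p.2‖ = 1 ∧ ε / 2 ≤ ‖g p.1 p.2‖)
    (fun p q ↦ p.1 < q.1 ∧ inner 𝕜 p.2 q.2 = 0) fun s _ ↦ by
      set K := Submodule.span 𝕜 (s.image Prod.snd : Set E)
      have hsmall : ∀ᶠ n in atTop, ‖(g n).comp K.subtypeL‖ < ε / 2 := by
        have htend : Tendsto (fun n ↦ (g n).comp K.subtypeL) atTop (𝓝 0) :=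
          tendsto_clm_of_tendsto_apply fun v ↦ hg v
        exact (tendsto_zero_iff_norm_tendsto_zero.1 htend).eventually_lt_const (by positivity)
      have hlate : ∀ᶠ n in atTop, ∀ q ∈ s, q.1 < n :=
        (eventually_all_finset s).2 fun q _ ↦ eventually_gt_atTop q.1
      obtain ⟨n, ⟨x, hx, hgx⟩, hgK, hn⟩ := (hfreq.and_eventually (hsmall.and hlate)).exists
      obtain ⟨e, heK, he, hge⟩ :=
        exists_mem_orthogonal_norm_eq_one_sub_le_norm_apply K (g n) hx hgK.le (by linarith)
      refine ⟨(n, e), ⟨he, by linarith⟩, fun q hq ↦ ⟨hn q hq, ?_⟩⟩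
      exact Submodule.inner_right_of_mem_orthogonal
        (Submodule.subset_span (Finset.mem_image_of_mem _ hq)) heK
  refine ⟨fun k ↦ (p k).1, fun k ↦ (p k).2, fun i j hij ↦ (hrel i j hij).1,
    ⟨fun k ↦ (hp k).1, fun i j hij ↦ ?_⟩, fun k ↦ (hp k).2⟩
  rcases hij.lt_or_gt with hij | hji
  · exact (hrel i j hij).2
  · exact inner_eq_zero_symm.1 (hrel j i hji).2

end

theorem limited_of_limited_on_orthonormal_sequences_general
    {𝕜 H Y : Type*} [RCLike 𝕜] [NormedAddCommGroup H] [InnerProductSpace 𝕜 H]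
    [NormedAddCommGroup Y] [NormedSpace 𝕜 Y]
    (T : H →L[𝕜] Y)
    (h : ∀ x : ℕ → H, Orthonormal 𝕜 x → IsLimited 𝕜 (Set.range fun n => T (x n))) :
    IsLimited 𝕜 (T '' Metric.closedBall (0 : H) 1) := by
  intro f hf ε hε
  by_contra! hcon
  have hfreq : ∃ᶠ n in atTop, ∃ x, ‖x‖ ≤ 1 ∧ ε ≤ ‖(f n).comp T x‖ :=
    frequently_atTop.2 fun N ↦ by
      obtain ⟨n, hn, _, ⟨x, hx, rfl⟩, hfx⟩ := hcon N
      exact ⟨n, hn, x, mem_closedBall_zero_iff.1 hx, hfx⟩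
  obtain ⟨m, e, hm, he, hge⟩ :=
    exists_orthonormal_half_le_norm_apply_of_frequently (fun x ↦ hf (T x)) hε hfreq
  obtain ⟨N, hN⟩ := h e he f hf (ε / 2) (half_pos hε)
  exact (hN (m N) hm.le_apply _ ⟨N, rfl⟩).not_ge (hge N)

theorem limited_of_limited_on_orthonormal_sequences
    {𝕜 H Y : Type*} [RCLike 𝕜] [NormedAddCommGroup H] [InnerProductSpace 𝕜 H]
    [CompleteSpace H] [NormedAddCommGroup Y] [NormedSpace 𝕜 Y] [CompleteSpace Y]
    (T : H →L[𝕜] Y)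
    (h : ∀ x : ℕ → H, Orthonormal 𝕜 x → IsLimited 𝕜 (Set.range fun n => T (x n))) :
    IsLimited 𝕜 (T '' Metric.closedBall (0 : H) 1) :=
  limited_of_limited_on_orthonormal_sequences_general T h
end

section
/- If 𝒯 is a set of bounded linear operators from a Hilbert space H to a Banach space Y such that for every orthonormal sequence (x_n) in H the set {T x_n : T ∈ 𝒯, n ∈ ℕ} is bounded, then sup_{T ∈ 𝒯} ‖T‖ < ∞. -/
open Submodule in
lemma exists_orthonormal_seq_starting_at
    {𝕜 H : Type*} [RCLike 𝕜] [NormedAddCommGroup H] [InnerProductSpace 𝕜 H]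
    [CompleteSpace H] (hinf : ¬ FiniteDimensional 𝕜 H) {u : H} (hu : ‖u‖ = 1) :
    ∃ x : ℕ → H, Orthonormal 𝕜 x ∧ x 0 = u := by
  classical
  have hsing : Orthonormal 𝕜 ((↑) : ({u} : Set H) → H) := by
    rw [orthonormal_subtype_iff_ite]
    rintro v rfl w' rfl
    simp [inner_self_eq_norm_sq_to_K, hu]
  obtain ⟨w, b, hsub, hb⟩ := hsing.exists_hilbertBasis_extension
  have huw : u ∈ w := hsub rfl
  have hwinf : w.Infinite := by
    intro hfin
    apply hinf
    have hd := b.dense_span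
    rw [hb, Subtype.range_coe] at hd
    have hfd : FiniteDimensional 𝕜 (span 𝕜 w) := .span_of_finite 𝕜 hfin
    have hclosed : IsClosed (span 𝕜 w : Set H) :=
      (span 𝕜 w).closed_of_finiteDimensional
    have htop : span 𝕜 w = ⊤ := by
      rw [← hclosed.submodule_topologicalClosure_eq]
      exact hd
    rw [htop] at hfd
    exact Module.Finite.equiv (LinearEquiv.ofTop (⊤ : Submodule 𝕜 H) rfl)
  have hdiff : (w \ {u}).Infinite := hwinf.diff (Set.finite_singleton u)
  let f := hdiff.natEmbedding
  let g : ℕ → w := fun n => match n with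
    | 0 => ⟨u, huw⟩
    | m + 1 => ⟨f m, (f m).2.1⟩
  have hginj : Function.Injective g := by
    intro m n hmn
    cases m with
    | zero =>
      cases n with
      | zero => rfl
      | succ n =>
        exact absurd (show (f n : H) = u from (congrArg Subtype.val hmn).symm) (f n).2.2
    | succ m =>
      cases n with
      | zero =>
        exact absurd (show (f m : H) = u from congrArg Subtype.val hmn) (f m).2.2
      | succ n =>
        have h0 : ((g (m + 1) : w) : H) = ((g (n + 1) : w) : H) := congrArg Subtype.val hmn
        have h1 : (f m : H) = (f n : H) := h0
        rw [f.injective (Subtype.ext h1)]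
  refine ⟨fun n => (g n : H), ?_, rfl⟩
  have : Orthonormal 𝕜 ((↑) : w → H) := hb ▸ b.orthonormal
  exact this.comp g hginj

theorem uniformly_bounded_of_bounded_on_orthonormal_sequences
    {𝕜 H Y : Type*} [RCLike 𝕜] [NormedAddCommGroup H] [InnerProductSpace 𝕜 H]
    [CompleteSpace H] [NormedAddCommGroup Y] [NormedSpace 𝕜 Y] [CompleteSpace Y]
    (hinf : ¬ FiniteDimensional 𝕜 H) (𝒯 : Set (H →L[𝕜] Y))
    (h : ∀ x : ℕ → H, Orthonormal 𝕜 x →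
      ∃ M : ℝ, ∀ T ∈ 𝒯, ∀ n : ℕ, ‖T (x n)‖ ≤ M) :
    ∃ M : ℝ, ∀ T ∈ 𝒯, ‖T‖ ≤ M := by
  have hpt : ∀ x : H, ∃ C : ℝ, ∀ T : 𝒯, ‖(T : H →L[𝕜] Y) x‖ ≤ C := by
    intro x
    rcases eq_or_ne x 0 with rfl | hx
    · exact ⟨0, fun T => by simp⟩
    · set u : H := (‖x‖⁻¹ : 𝕜) • x with hudef
      have hu : ‖u‖ = 1 := norm_smul_inv_norm hx
      obtain ⟨v, hv, hv0⟩ := exists_orthonormal_seq_starting_at hinf hu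
      obtain ⟨M, hM⟩ := h v hv
      refine ⟨‖x‖ * M, fun ⟨T, hT⟩ => ?_⟩
      have hTu : ‖T u‖ ≤ M := by simpa [hv0] using hM T hT 0
      have hnx : ‖x‖ ≠ 0 := norm_ne_zero_iff.mpr hx
      have hnxK : (‖x‖ : 𝕜) ≠ 0 := RCLike.ofReal_ne_zero.mpr hnx
      have hxu : x = (‖x‖ : 𝕜) • u := by
        rw [hudef, smul_smul, mul_inv_cancel₀ hnxK, one_smul]
      calc ‖T x‖ = ‖x‖ * ‖T u‖ := by
            conv_lhs => rw [hxu]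
            rw [map_smul, norm_smul, RCLike.norm_ofReal,
              abs_of_nonneg (norm_nonneg x)]
        _ ≤ ‖x‖ * M := by
            exact mul_le_mul_of_nonneg_left hTu (norm_nonneg x)
  obtain ⟨C, hC⟩ := banach_steinhaus hpt
  exact ⟨C, fun T hT => hC ⟨T, hT⟩⟩
end
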